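/- Let (S₁,·) and (S₂,·) be commutative semigroups and let A ⊆ S₁ and B ⊆ S₂ be J-sets. Then A × B is a J-set in the product semigroup S₁ × S₂ (with coordinatewise multiplication). -/

import Mathlib

/-- The product `∏_{t ∈ H} f t` over a nonempty finite set `H ⊆ ℕ` in a semigroup,
computed in increasing order of the indices (in a commutative semigroup the order
is immaterial). -/
def semigroupProd {S : Type*} [Semigroup S] (f : ℕ → S) (H : Finset ℕ) (hH : H.Nonempty) : S :=
  ((H.sort (· ≤ ·)).tail).foldl (fun x t => x * f t) (f (H.min' hH))

/-- A set `A` in a commutative semigroup `S` is a J-set if for every finite nonempty set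
`F` of sequences in `S` there are `a ∈ S` and a finite nonempty `H ⊆ ℕ` such that
`a * ∏_{t ∈ H} f t ∈ A` for every `f ∈ F`. -/
def IsJSet {S : Type*} [CommSemigroup S] (A : Set S) : Prop :=
  ∀ F : Finset (ℕ → S), F.Nonempty →
    ∃ a : S, ∃ H : Finset ℕ, ∃ hH : H.Nonempty,
      ∀ f ∈ F, a * semigroupProd f H hH ∈ A

/-!
Colour each finite nonempty `H ⊆ ℕ` good if some `a` puts `a * ∏_{t ∈ H} (f t).1` in `A`
for all `f ∈ F`. By Hindman's theorem, in its finite unions form, there are disjoint nonempty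
blocks `J n` all of whose finite unions have the same colour. A J-set applied to the block
products `n ↦ ∏_{t ∈ J n} f t` yields a witness that is a finite union of blocks. Doing this
for `A` shows the common colour is good; doing it for `B` then gives one union of blocks
serving both coordinates.
-/

open Finset Function

theorem Hindman.exists_eq_finsetSum_of_mem_FS {M : Type*} [AddCommMonoid M] {a : Stream' M}
    {m : M} (hm : m ∈ FS a) : ∃ s : Finset ℕ, s.Nonempty ∧ m = ∑ i ∈ s, a.get i := by
  induction hm with
  | head' a => exact ⟨{0}, singleton_nonempty 0, by simp [Stream'.head]⟩
  | tail' a m _ ih =>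
    obtain ⟨s, hs, rfl⟩ := ih
    exact ⟨s.map (addRightEmbedding 1), hs.map, by simp [Stream'.get_tail]⟩
  | cons' a m _ ih =>
    obtain ⟨s, hs, rfl⟩ := ih
    refine ⟨cons 0 (s.map (addRightEmbedding 1)) (by simp), cons_nonempty _, ?_⟩
    simp [Stream'.get_tail, Stream'.head]

theorem MulHom.map_semigroupProd {S T : Type*} [Semigroup S] [Semigroup T] (φ : S →ₙ* T)
    (f : ℕ → S) (H : Finset ℕ) (hH : H.Nonempty) :
    φ (semigroupProd f H hH) = semigroupProd (φ ∘ f) H hH :=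
  (List.foldl_hom φ fun x t => (φ.map_mul x (f t)).symm).symm

theorem semigroupProd_eq_prod {M : Type*} [CommMonoid M] (f : ℕ → M) (H : Finset ℕ)
    (hH : H.Nonempty) : semigroupProd f H hH = ∏ t ∈ H, f t := by
  have hsort : H.sort (· ≤ ·) = H.min' hH :: (H.sort (· ≤ ·)).tail := by
    have hne : H.sort (· ≤ ·) ≠ [] := List.ne_nil_of_mem ((H.mem_sort _).2 (H.min'_mem hH))
    rw [min'_eq_sorted_zero, ← List.head_eq_getElem_zero hne, List.cons_head_tail]
  have hfoldl : ∀ (l : List ℕ) (x : M),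
      l.foldl (fun x t => x * f t) x = x * (l.map f).prod := by
    intro l
    induction l with
    | nil => simp
    | cons t l ih => intro x; simp [ih, mul_assoc]
  rw [semigroupProd, hfoldl, prod_eq_multiset_prod, ← sort_eq H (· ≤ ·), Multiset.map_coe,
    Multiset.prod_coe, hsort, List.map_cons, List.prod_cons, ← hsort]

theorem WithOne.coe_semigroupProd {S : Type*} [CommSemigroup S] (f : ℕ → S) (H : Finset ℕ)
    (hH : H.Nonempty) :
    ((semigroupProd f H hH : S) : WithOne S) = ∏ t ∈ H, (f t : WithOne S) := by
  rw [← semigroupProd_eq_prod]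
  exact WithOne.coeMulHom.map_semigroupProd f H hH

theorem semigroupProd_biUnion {S : Type*} [CommSemigroup S] (f : ℕ → S) {K : Finset ℕ}
    (hK : K.Nonempty) {J : ℕ → Finset ℕ} (hJ : ∀ n, (J n).Nonempty)
    (hdisj : Pairwise (Disjoint on J)) :
    semigroupProd (fun n => semigroupProd f (J n) (hJ n)) K hK =
      semigroupProd f (K.biUnion J) (hK.biUnion fun n _ => hJ n) := by
  apply WithOne.coe_injective
  simp only [WithOne.coe_semigroupProd]
  rw [prod_biUnion fun m _ n _ hmn => hdisj hmn]

theorem IsJSet.exists_biUnion {S : Type*} [CommSemigroup S] {A : Set S} (hA : IsJSet A)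
    {F : Finset (ℕ → S)} (hF : F.Nonempty) {J : ℕ → Finset ℕ} (hJ : ∀ n, (J n).Nonempty)
    (hdisj : Pairwise (Disjoint on J)) :
    ∃ (K : Finset ℕ) (hK : K.Nonempty) (a : S),
      ∀ f ∈ F, a * semigroupProd f (K.biUnion J) (hK.biUnion fun n _ => hJ n) ∈ A := by
  classical
  obtain ⟨a, K, hK, ha⟩ := hA (F.image fun f n => semigroupProd f (J n) (hJ n)) (hF.image _)
  refine ⟨K, hK, a, fun f hf => ?_⟩
  rw [← semigroupProd_biUnion f hK hJ hdisj]
  exact ha _ (mem_image_of_mem _ hf)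

theorem exists_blocks_biUnion_monochromatic (C : Set (Finset ℕ)) :
    ∃ J : ℕ → Finset ℕ, (∀ n, (J n).Nonempty) ∧ Pairwise (Disjoint on J) ∧
      ((∀ K : Finset ℕ, K.Nonempty → K.biUnion J ∈ C) ∨
        ∀ K : Finset ℕ, K.Nonempty → K.biUnion J ∉ C) := by
  classical
  -- Finite sets are encoded as nodup multisets, the finite sums of the stream of singletons; a
  -- sum `y m + y n` of two blocks being nodup is what makes the blocks disjoint.
  let x : Stream' (Multiset ℕ) := fun n => {n}
  have hx : ∀ m ∈ Hindman.FS x, m ≠ 0 ∧ m.Nodup := by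
    intro m hm
    obtain ⟨s, hs, rfl⟩ := Hindman.exists_eq_finsetSum_of_mem_FS hm
    rw [show ∑ i ∈ s, x.get i = s.val from Multiset.sum_map_singleton s.val]
    exact ⟨mt val_eq_zero.1 hs.ne_empty, s.nodup⟩
  let P : Set (Multiset ℕ) := {m | m.toFinset ∈ C}
  obtain ⟨c, hc, y, hy⟩ :=
    Hindman.FS_partition_regular x {P ∩ Hindman.FS x, Pᶜ ∩ Hindman.FS x} (by simp)
      fun m hm => by by_cases h : m ∈ P <;> simp [h, hm]
  have hyx : Hindman.FS y ⊆ Hindman.FS x :=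
    hy.trans (by rcases hc with rfl | rfl <;> exact Set.inter_subset_right)
  have hdisj : ∀ m n, m < n → Disjoint (y.get m).toFinset (y.get n).toFinset := fun m n hmn =>
    Multiset.disjoint_toFinset.2
      (Multiset.nodup_add.1 (hx _ (hyx (Hindman.FS.add_two y m n hmn))).2).2.2
  have hunion : ∀ K : Finset ℕ,
      (∑ m ∈ K, y.get m).toFinset = K.biUnion fun m => (y.get m).toFinset := by
    intro K; ext; simp [Multiset.mem_sum]
  refine ⟨fun n => (y.get n).toFinset,
    fun n => Multiset.toFinset_nonempty.2 (hx _ (hyx (Hindman.FS.singleton y n))).1,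
    fun m n hmn => hmn.lt_or_gt.elim (hdisj m n) fun h => (hdisj n m h).symm, ?_⟩
  rcases hc with rfl | rfl
  · exact .inl fun K hK => hunion K ▸ (hy (Hindman.FS.finsetSum y K hK)).1
  · exact .inr fun K hK => hunion K ▸ (hy (Hindman.FS.finsetSum y K hK)).1

theorem mul_semigroupProd_mem_prod {S T : Type*} [Semigroup S] [Semigroup T] {A : Set S}
    {B : Set T} (a : S) (b : T) (f : ℕ → S × T) (H : Finset ℕ) (hH : H.Nonempty) :
    (a, b) * semigroupProd f H hH ∈ A ×ˢ B ↔
      a * semigroupProd (Prod.fst ∘ f) H hH ∈ A ∧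
        b * semigroupProd (Prod.snd ∘ f) H hH ∈ B := by
  rw [Set.mem_prod, Prod.fst_mul, Prod.snd_mul, ← MulHom.coe_fst, ← MulHom.coe_snd,
    MulHom.map_semigroupProd, MulHom.map_semigroupProd]
  exact Iff.rfl

theorem jset_prod {S₁ S₂ : Type*} [CommSemigroup S₁] [CommSemigroup S₂]
    {A : Set S₁} {B : Set S₂} (hA : IsJSet A) (hB : IsJSet B) :
    IsJSet (A ×ˢ B) := by
  classical
  intro F hF
  let C : Set (Finset ℕ) := {H | ∃ (hH : H.Nonempty) (a : S₁),
    ∀ f ∈ F, a * semigroupProd (Prod.fst ∘ f) H hH ∈ A}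
  obtain ⟨J, hJ, hdisj, hgood | hbad⟩ := exists_blocks_biUnion_monochromatic C
  · obtain ⟨K, hK, b, hb⟩ := hB.exists_biUnion (hF.image fun f => Prod.snd ∘ f) hJ hdisj
    obtain ⟨_, a, ha⟩ := hgood K hK
    refine ⟨(a, b), K.biUnion J, hK.biUnion fun n _ => hJ n, fun f hf => ?_⟩
    exact (mul_semigroupProd_mem_prod a b f _ _).2 ⟨ha f hf, hb _ (mem_image_of_mem _ hf)⟩
  · obtain ⟨K, hK, a, ha⟩ := hA.exists_biUnion (hF.image fun f => Prod.fst ∘ f) hJ hdisj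
    exact hbad K hK ⟨_, a, fun f hf => ha _ (mem_image_of_mem _ hf)⟩ |>.elim
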